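/- arXiv:math/0504060 — 12 statements merged into one kernel-verified Lean document; each statement's English description precedes it below -/
import Mathlib

section
/- There exist monoids M and N, monoid homomorphisms f : M →* N and g : N →* M, and a bijection φ : N ≃ M satisfying g(n) * φ(n') * m = φ(n * n' * f(m)) for all n, n' ∈ N and m ∈ M, such that f is NOT bijective. (Hence a monoid homomorphism which, viewed as a functor between one-object categories, admits a right adjoint need not be an isomorphism; this answers an open question of Manes negatively.) -/
namespace ManesAux

abbrev E := Function.End ℕ

/-- A pairing bijection `ℕ ≃ ℕ × ℕ`. -/
def q : ℕ ≃ ℕ × ℕ := (Denumerable.eqv (ℕ × ℕ)).symm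

/-- The diagonal homomorphism. -/
def f : E →* E × E where
  toFun m := (m, m)
  map_one' := rfl
  map_mul' _ _ := rfl

/-- The right adjoint `g : E × E →* E`. -/
def g : E × E →* E where
  toFun n := fun x => q.symm (n.1 (q x).1, n.2 (q x).2)
  map_one' := funext fun x => q.symm_apply_apply x
  map_mul' n n' := by
    funext x
    show q.symm (n.1 (n'.1 (q x).1), n.2 (n'.2 (q x).2)) =
      q.symm (n.1 (q (q.symm (n'.1 (q x).1, n'.2 (q x).2))).1,
              n.2 (q (q.symm (n'.1 (q x).1, n'.2 (q x).2))).2)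
    rw [Equiv.apply_symm_apply]

/-- The bijection `φ : E × E ≃ E`. -/
def φ : (E × E) ≃ E where
  toFun n := fun x => q.symm (n.1 x, n.2 x)
  invFun m := (fun x => (q (m x)).1, fun x => (q (m x)).2)
  left_inv n := by
    refine Prod.ext (funext fun x => ?_) (funext fun x => ?_) <;> simp
  right_inv m := by
    funext x
    show q.symm ((q (m x)).1, (q (m x)).2) = m x
    exact q.symm_apply_apply (m x)

theorem key (n n' : E × E) (m : E) : g n * φ n' * m = φ (n * n' * f m) := by
  funext x
  show q.symm
      (n.1 (q (q.symm (n'.1 (m x), n'.2 (m x)))).1,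
       n.2 (q (q.symm (n'.1 (m x), n'.2 (m x)))).2) =
    q.symm (n.1 (n'.1 (m x)), n.2 (n'.2 (m x)))
  rw [Equiv.apply_symm_apply]

end ManesAux

/-- There exist monoids `M`, `N`, monoid homomorphisms `f : M →* N`, `g : N →* M`
and a bijection `φ : N ≃ M` satisfying the adjunction identity
`g n * φ n' * m = φ (n * n' * f m)`, yet `f` is not bijective. -/
theorem exists_adjunction_in_monoids_with_f_not_bijective :
    ∃ (M N : MonCat) (f : M →* N) (g : N →* M) (φ : N ≃ M),
      (∀ (n n' : N) (m : M), g n * φ n' * m = φ (n * n' * f m)) ∧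
      ¬ Function.Bijective f := by
  classical
  refine ⟨MonCat.of (ULift ManesAux.E), MonCat.of (ULift (ManesAux.E × ManesAux.E)),
    MonoidHom.comp MulEquiv.ulift.symm.toMonoidHom
      (ManesAux.f.comp MulEquiv.ulift.toMonoidHom),
    MonoidHom.comp MulEquiv.ulift.symm.toMonoidHom
      (ManesAux.g.comp MulEquiv.ulift.toMonoidHom),
    Equiv.ulift.trans (ManesAux.φ.trans Equiv.ulift.symm), ?_, ?_⟩
  · intro n n' m
    exact ULift.down_injective (ManesAux.key n.down n'.down m.down)
  · rintro ⟨-, hsurj⟩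
    obtain ⟨m, hm⟩ := hsurj (ULift.up ((1 : ManesAux.E), (fun _ => 0 : ManesAux.E)))
    have hm' : (m.down, m.down) = ((1 : ManesAux.E), fun _ => 0) := congrArg ULift.down hm
    have h1 : m.down = 1 := congrArg Prod.fst hm'
    have h2 : m.down = fun _ => 0 := congrArg Prod.snd hm'
    have h3 : (1 : ManesAux.E) = fun _ => 0 := h1.symm.trans h2
    exact Nat.one_ne_zero (congrFun h3 1)
end

section
/- (Proposition 1) Both f and g are injective monoid homomorphisms, the right-translation map M → M, m ↦ m * η is a surjective map of sets, and the left-translation map N → N, n ↦ ε * n is a surjective map of sets. -/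
/-- (Proposition 1) `f` and `g` are injective, right translation by `η := φ 1`
on `M` is surjective, and left translation by `ε := φ.symm 1` on `N` is surjective. -/
theorem f_g_injective_translations_surjective {M N : Type*} [Monoid M] [Monoid N]
    (f : M →* N) (g : N →* M) (φ : N ≃ M)
    (hadj : ∀ (n n' : N) (m : M), g n * φ n' * m = φ (n * n' * f m)) :
    Function.Injective f ∧ Function.Injective g ∧
    Function.Surjective (fun m : M => m * φ 1) ∧
    Function.Surjective (fun n : N => φ.symm 1 * n) := by
  have hg : ∀ n, g n * φ 1 = φ n := fun n => by
    have := hadj n 1 1; simpa using this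
  refine ⟨?_, ?_, ?_, ?_⟩
  · intro m₁ m₂ h
    have h1 := hadj 1 (φ.symm 1) m₁
    have h2 := hadj 1 (φ.symm 1) m₂
    simp only [one_mul, map_one, Equiv.apply_symm_apply] at h1 h2
    rw [h] at h1
    exact h1.trans h2.symm
  · intro n₁ n₂ h
    have : φ n₁ = φ n₂ := (hg n₁).symm.trans (by rw [h, hg n₂])
    exact φ.injective this
  · intro m
    exact ⟨g (φ.symm m), by simp [hg]⟩
  · intro n
    refine ⟨f (φ n), ?_⟩
    have := hadj 1 (φ.symm 1) (φ n)
    simp only [one_mul, map_one, Equiv.apply_symm_apply] at this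
    exact φ.injective (by simpa using this.symm)
end

section
/- The left-translation map M → M, m ↦ η * m is injective, and the right-translation map N → N, n ↦ n * ε is injective. -/
/-- Left translation by `η := φ 1` on `M` is injective, and right
translation by `ε := φ.symm 1` on `N` is injective. -/
theorem translations_injective {M N : Type*} [Monoid M] [Monoid N]
    (f : M →* N) (g : N →* M) (φ : N ≃ M)
    (hadj : ∀ (n n' : N) (m : M), g n * φ n' * m = φ (n * n' * f m)) :
    Function.Injective (fun m : M => φ 1 * m) ∧
    Function.Injective (fun n : N => n * φ.symm 1) := by
  -- key identities
  have h1 : ∀ m : M, φ 1 * m = φ (f m) := by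
    intro m
    have := hadj 1 1 m
    simpa using this
  have h2 : ∀ m : M, m = φ (φ.symm 1 * f m) := by
    intro m
    have := hadj 1 (φ.symm 1) m
    simpa using this
  have h3 : ∀ n : N, g n = φ (n * φ.symm 1) := by
    intro n
    have := hadj n (φ.symm 1) 1
    simpa using this
  have h4 : ∀ n : N, g n * φ 1 = φ n := by
    intro n
    have := hadj n 1 1
    simpa using this
  constructor
  · intro m m' h
    simp only [h1] at h
    have hf : f m = f m' := φ.injective h
    calc m = φ (φ.symm 1 * f m) := h2 m
      _ = φ (φ.symm 1 * f m') := by rw [hf]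
      _ = m' := (h2 m').symm
  · intro n n' h
    simp only at h
    have hg : g n = g n' := by rw [h3, h3, h]
    have := (h4 n).symm.trans (by rw [hg, h4 n'])
    exact φ.injective this
end

section
/- (Unit and counit are natural transformations) For all m ∈ M, g(f(m)) * η = η * m, and for all n ∈ N, ε * f(g(n)) = n * ε. -/
/-- (Unit and counit are natural transformations) With `η := φ 1` and
`ε := φ.symm 1`: `g (f m) * η = η * m` for all `m ∈ M`, and
`ε * f (g n) = n * ε` for all `n ∈ N`. -/
theorem unit_counit_natural {M N : Type*} [Monoid M] [Monoid N]
    (f : M →* N) (g : N →* M) (φ : N ≃ M)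
    (hadj : ∀ (n n' : N) (m : M), g n * φ n' * m = φ (n * n' * f m)) :
    (∀ m : M, g (f m) * φ 1 = φ 1 * m) ∧
    (∀ n : N, φ.symm 1 * f (g n) = n * φ.symm 1) := by
  constructor
  · intro m
    have h1 : g (f m) * φ 1 = φ (f m) := by
      have := hadj (f m) 1 1
      simpa using this
    have h2 : φ 1 * m = φ (f m) := by
      have := hadj 1 1 m
      simpa using this
    rw [h1, h2]
  · intro n
    apply φ.injective
    have hε : φ (φ.symm 1) = 1 := φ.apply_symm_apply 1
    have h1 : φ (φ.symm 1 * f (g n)) = g (φ.symm 1) * φ 1 * g n := by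
      have := hadj (φ.symm 1) 1 (g n)
      simpa using this.symm
    have h2 : φ (n * φ.symm 1) = g n := by
      have := hadj n (φ.symm 1) 1
      simpa [hε] using this.symm
    have h3 : g (φ.symm 1) * φ 1 = 1 := by
      have := hadj (φ.symm 1) 1 1
      simpa [hε] using this
    rw [h1, h2, h3, one_mul]
end

section
/- (From adjunctions to the one-sorted structure, Proposition 2, one direction) Set f' := g ∘ f : M →* M, N' := the range of g (a submonoid of M), and ε' := g(ε). Then f'(m) ∈ N' for all m ∈ M, and the following identities hold: f'(m) * η = η * m for all m ∈ M; ε' * f'(n') = n' * ε' for all n' ∈ N'; ε' * η = 1; and ε' * f'(η) = 1. -/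
/-- (Proposition 2, one direction) With `f' := g ∘ f`, `N' := range g`,
`η := φ 1`, `ε' := g (φ.symm 1)`: `f'` maps into `N'`, and the identities
(17a)-(17d) hold. -/
theorem adjunction_to_one_sorted {M N : Type*} [Monoid M] [Monoid N]
    (f : M →* N) (g : N →* M) (φ : N ≃ M)
    (hadj : ∀ (n n' : N) (m : M), g n * φ n' * m = φ (n * n' * f m)) :
    (∀ m : M, (g.comp f) m ∈ MonoidHom.mrange g) ∧
    (∀ m : M, (g.comp f) m * φ 1 = φ 1 * m) ∧
    (∀ n' ∈ MonoidHom.mrange g, g (φ.symm 1) * (g.comp f) n' = n' * g (φ.symm 1)) ∧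
    g (φ.symm 1) * φ 1 = 1 ∧
    g (φ.symm 1) * (g.comp f) (φ 1) = 1 := by
  have h1 : ∀ n : N, φ n = g n * φ 1 := by
    intro n
    have := hadj n 1 1
    simpa using this.symm
  have h2 : ∀ (n : N) (m : M), φ n * m = φ (n * f m) := by
    intro n m
    have := hadj 1 n m
    simpa using this
  have hεφ : φ (φ.symm 1) = 1 := φ.apply_symm_apply 1
  refine ⟨fun m => ⟨f m, rfl⟩, ?_, ?_, ?_, ?_⟩
  · intro m
    have : φ 1 * m = φ (f m) := by simpa using h2 1 m
    rw [MonoidHom.comp_apply, this, ← h1]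
  · rintro n' ⟨k, rfl⟩
    have key : φ.symm 1 * f (g k) = k * φ.symm 1 := by
      apply φ.injective
      have e1 : φ (φ.symm 1 * f (g k)) = g k := by
        rw [← h2, hεφ, one_mul]
      have e2 : φ (k * φ.symm 1) = g k := by
        have := hadj k (φ.symm 1) 1
        simp only [mul_one, map_one] at this
        rw [← this, hεφ, mul_one]
      rw [e1, e2]
    calc g (φ.symm 1) * (g.comp f) (g k) = g (φ.symm 1 * f (g k)) := by
          simp [MonoidHom.comp_apply, map_mul]
      _ = g (k * φ.symm 1) := by rw [key]
      _ = g k * g (φ.symm 1) := by rw [map_mul]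
  · rw [← h1, hεφ]
  · have key : φ.symm 1 * f (φ 1) = 1 := by
      apply φ.injective
      rw [← h2, hεφ, one_mul]
    calc g (φ.symm 1) * (g.comp f) (φ 1) = g (φ.symm 1 * f (φ 1)) := by
          simp [MonoidHom.comp_apply, map_mul]
      _ = 1 := by rw [key, map_one]
end

section
/- (From the one-sorted structure back to adjunctions, Proposition 2, converse direction) The map φ : N → M, n ↦ n * η is a bijection with two-sided inverse given by m ↦ ε * f(m) (note ε * f(m) ∈ N), and the adjunction identity holds: for all n, n' ∈ N and m ∈ M, n * (n' * η) * m = (n * n' * f(m)) * η. -/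
/-- (Proposition 2, converse direction) The map `N → M`, `n ↦ n * η` is a
bijection with two-sided inverse `m ↦ ε * f m` (which lands in `N`), and the
adjunction identity holds. -/
theorem one_sorted_to_adjunction {M : Type*} [Monoid M] (N : Submonoid M)
    (f : M →* M) (hfN : ∀ m : M, f m ∈ N) (η ε : M) (hε : ε ∈ N)
    (h17a : ∀ m : M, f m * η = η * m)
    (h17b : ∀ n ∈ N, ε * f n = n * ε)
    (h17c : ε * η = 1)
    (h17d : ε * f η = 1) :
    (∀ m : M, ε * f m ∈ N) ∧
    Function.Bijective (fun n : N => (n : M) * η) ∧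
    (∀ n : N, ε * f ((n : M) * η) = (n : M)) ∧
    (∀ m : M, (ε * f m) * η = m) ∧
    (∀ n n' : N, ∀ m : M,
      (n : M) * ((n' : M) * η) * m = ((n : M) * (n' : M) * f m) * η) := by
  have hmem : ∀ m : M, ε * f m ∈ N := fun m => N.mul_mem hε (hfN m)
  have hright : ∀ m : M, (ε * f m) * η = m := fun m => by
    rw [mul_assoc, h17a, ← mul_assoc, h17c, one_mul]
  have hleft : ∀ n : N, ε * f ((n : M) * η) = (n : M) := fun n => by
    rw [map_mul, ← mul_assoc, h17b n n.2, mul_assoc, h17d, mul_one]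
  refine ⟨hmem, ?_, hleft, hright, ?_⟩
  · constructor
    · intro a b hab
      simp only at hab
      exact Subtype.ext (by rw [← hleft a, ← hleft b, hab])
    · intro m
      exact ⟨⟨ε * f m, hmem m⟩, hright m⟩
  · intro n n' m
    simp only [mul_assoc, h17a]
end

section
/- (Proposition 3) The following conditions are equivalent: (a) f is surjective; (b) f is bijective; (c) N = M (i.e. N is the whole monoid); (d) f(η) = η; (e) f(ε) = ε; (f) η * ε = 1; (g) f(m) = η * m * ε for every m ∈ M. -/
/-- (Proposition 3) The conditions (a) `f` surjective, (b) `f` bijective,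
(c) `N = M`, (d) `f η = η`, (e) `f ε = ε`, (f) `η * ε = 1`,
(g) `f m = η * m * ε` for all `m`, are all equivalent. -/
theorem prop3_tfae {M : Type*} [Monoid M] (N : Submonoid M)
    (f : M →* M) (hfN : ∀ m : M, f m ∈ N) (η ε : M) (hε : ε ∈ N)
    (h17a : ∀ m : M, f m * η = η * m)
    (h17b : ∀ n ∈ N, ε * f n = n * ε)
    (h17c : ε * η = 1)
    (h17d : ε * f η = 1) :
    [Function.Surjective f,
     Function.Bijective f,
     N = ⊤,
     f η = η,
     f ε = ε,
     η * ε = 1,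
     ∀ m : M, f m = η * m * ε].TFAE := by
  have hinj : Function.Injective f := by
    intro x y hxy
    have h1 : η * x = η * y := by rw [← h17a, ← h17a, hxy]
    calc x = ε * η * x := by rw [h17c, one_mul]
    _ = ε * η * y := by rw [mul_assoc, h1, mul_assoc]
    _ = y := by rw [h17c, one_mul]
  have h67 : η * ε = 1 → ∀ m : M, f m = η * m * ε := by
    intro h m
    calc f m = f m * (η * ε) := by rw [h, mul_one]
    _ = f m * η * ε := by rw [mul_assoc]
    _ = η * m * ε := by rw [h17a]
  tfae_have 1 → 2 := fun h => ⟨hinj, h⟩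
  tfae_have 2 → 1 := fun h => h.2
  tfae_have 1 → 3 := by
    intro h
    rw [eq_top_iff]
    intro m _
    obtain ⟨x, rfl⟩ := h m
    exact hfN x
  tfae_have 3 → 6 := by
    intro h
    have := h17b η (h ▸ Submonoid.mem_top η)
    rw [h17d] at this
    exact this.symm
  tfae_have 6 → 7 := h67
  tfae_have 7 → 6 := by
    intro h
    have h1 : ε * f η = ε * η * η * ε := by
      rw [h η, ← mul_assoc, ← mul_assoc]
    rw [h17d, h17c, one_mul] at h1
    exact h1.symm
  tfae_have 6 → 4 := by
    intro h
    have h1 : f η * η * ε = η * η * ε := by rw [h17a]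
    rwa [mul_assoc, mul_assoc, h, mul_one, mul_one] at h1
  tfae_have 4 → 6 := by
    intro h
    have h1 := h17b (f η) (hfN η)
    rw [show f (f η) = f η from congrArg f h, h17d, h] at h1
    exact h1.symm
  tfae_have 6 → 5 := by
    intro h
    rw [h67 h ε, h, one_mul]
  tfae_have 5 → 6 := by
    intro h
    have h1 := h17a ε
    rw [h, h17c] at h1
    exact h1.symm
  tfae_have 6 → 1 := by
    intro h m
    refine ⟨ε * m * η, ?_⟩
    rw [h67 h, ← mul_assoc, ← mul_assoc, h, one_mul, mul_assoc, h, mul_one]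
  tfae_finish
end

section
/- If moreover η * ε = 1, then f(m) = η * m * ε for every m ∈ M, and f is bijective with two-sided inverse given by m ↦ ε * m * η; in particular f is an inner automorphism of M. -/
/-- If moreover `η * ε = 1`, then `f m = η * m * ε` for all `m`, and `f` is
bijective with two-sided inverse `m ↦ ε * m * η`; in particular `f` is an
inner automorphism of `M`. -/
theorem inner_automorphism_of_eta_eps {M : Type*} [Monoid M] (N : Submonoid M)
    (f : M →* M) (hfN : ∀ m : M, f m ∈ N) (η ε : M) (hε : ε ∈ N)
    (h17a : ∀ m : M, f m * η = η * m)
    (h17b : ∀ n ∈ N, ε * f n = n * ε)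
    (h17c : ε * η = 1)
    (h17d : ε * f η = 1)
    (hf : η * ε = 1) :
    (∀ m : M, f m = η * m * ε) ∧
    Function.Bijective f ∧
    (∀ m : M, ε * f m * η = m) ∧
    (∀ m : M, f (ε * m * η) = m) := by
  have key : ∀ m : M, f m = η * m * ε := fun m => by
    have := congrArg (· * ε) (h17a m)
    simpa [mul_assoc, hf] using this
  have left : ∀ m : M, ε * f m * η = m := fun m => by
    rw [key m]
    calc ε * (η * m * ε) * η = (ε * η) * m * (ε * η) := by
          simp [mul_assoc]
      _ = m := by simp [h17c]
  have right : ∀ m : M, f (ε * m * η) = m := fun m => by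
    rw [key (ε * m * η)]
    calc η * (ε * m * η) * ε = (η * ε) * m * (η * ε) := by
          simp [mul_assoc]
      _ = m := by simp [hf]
  refine ⟨key, ⟨?_, ?_⟩, left, right⟩
  · intro a b hab
    have := congrArg (fun x => ε * x * η) hab
    simpa [left a, left b] using this
  · intro m
    exact ⟨ε * m * η, right m⟩
end

section
/- (Towards Proposition 4) The subset N := { x ∈ M | ∃ m ∈ M, x = ε * f(m) } is a submonoid of M (it contains 1 and is closed under multiplication), it contains f(m) for every m ∈ M, and every n ∈ N satisfies ε * f(n) = n * ε. -/
/-- (Towards Proposition 4) The subset `N = {x | ∃ m, x = ε * f m}` contains `1`,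
is closed under multiplication (hence is a submonoid of `M`), contains `f m`
for every `m`, and every `n ∈ N` satisfies `ε * f n = n * ε`. -/
theorem range_is_submonoid {M : Type*} [Monoid M] (f : M →* M) (η ε : M)
    (h26a : ε * η = 1)
    (h26b : ε * f η = 1)
    (h26c : ε * f ε = ε * ε)
    (h26d : ∀ m : M, ε * f (f m) = f m * ε)
    (h26e : ∀ m : M, f m * η = η * m) :
    (1 : M) ∈ {x : M | ∃ m : M, x = ε * f m} ∧
    (∀ a ∈ {x : M | ∃ m : M, x = ε * f m}, ∀ b ∈ {x : M | ∃ m : M, x = ε * f m},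
      a * b ∈ {x : M | ∃ m : M, x = ε * f m}) ∧
    (∀ m : M, f m ∈ {x : M | ∃ m : M, x = ε * f m}) ∧
    (∀ n ∈ {x : M | ∃ m : M, x = ε * f m}, ε * f n = n * ε) := by
  refine ⟨⟨η, h26b.symm⟩, ?_, ?_, ?_⟩
  · rintro a ⟨m, rfl⟩ b ⟨k, rfl⟩
    refine ⟨ε * f m * k, ?_⟩
    calc ε * f m * (ε * f k) = ε * (f m * ε) * f k := by
          simp [mul_assoc]
      _ = ε * (ε * f (f m)) * f k := by rw [h26d]
      _ = (ε * f ε) * f (f m) * f k := by rw [h26c]; simp [mul_assoc]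
      _ = ε * f (ε * f m * k) := by simp [mul_assoc]
  · intro m
    exact ⟨η * m, by rw [map_mul, ← mul_assoc, h26b, one_mul]⟩
  · rintro n ⟨m, rfl⟩
    calc ε * f (ε * f m) = (ε * f ε) * f (f m) := by simp [mul_assoc]
      _ = ε * (ε * f (f m)) := by rw [h26c, mul_assoc]
      _ = ε * (f m * ε) := by rw [h26d]
      _ = ε * f m * ε := by rw [mul_assoc]
end

section
/- For every m ∈ M, ε * f(ε * f(m)) = ε * f(m) * ε. -/
/-- For every `m ∈ M`, `ε * f (ε * f m) = ε * f m * ε`. -/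
theorem eps_f_identity {M : Type*} [Monoid M] (f : M →* M) (η ε : M)
    (h26a : ε * η = 1)
    (h26b : ε * f η = 1)
    (h26c : ε * f ε = ε * ε)
    (h26d : ∀ m : M, ε * f (f m) = f m * ε)
    (h26e : ∀ m : M, f m * η = η * m) :
    ∀ m : M, ε * f (ε * f m) = ε * f m * ε := by
  intro m
  calc ε * f (ε * f m) = ε * f ε * f (f m) := by rw [map_mul, mul_assoc]
    _ = ε * (ε * f (f m)) := by rw [h26c, mul_assoc]
    _ = ε * (f m * ε) := by rw [h26d]
    _ = ε * f m * ε := by rw [mul_assoc]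
end

section
/- (Theorem 1, canonical form) For every element x of F₀ there exist unique k, l ∈ ℕ and unique sequences 0 ≤ i₁ ≤ i₂ ≤ … ≤ i_k and j₁ ≥ j₂ ≥ … ≥ j_l ≥ 0 of natural numbers such that x = π(η_{i₁} * … * η_{i_k} * ε_{j₁} * … * ε_{j_l}) (with the empty product understood as 1 when k = 0 or l = 0). In particular, two words η_{i₁}…η_{i_k} ε_{j₁}…ε_{j_l} and η_{i'₁}…η_{i'_{k'}} ε_{j'₁}…ε_{j'_{l'}} with nondecreasing η-indices and nonincreasing ε-indices are identified in F₀ only if they are equal as words. -/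
/-!
Existence is a rewriting argument: multiplying a canonical word on the left by a generator and
moving that generator to its place with the relations gives a canonical word again.

Uniqueness comes from an action of `F₀` on `ℕ`: `η_i` acts as the increasing map skipping `i` and
`ε_i` as the surjection identifying `i` and `i + 1` (the relations `R₀` are cosimplicial
identities). A canonical word acts as `H ∘ E` with `H` strictly increasing and `E` surjective, so
the range of `H` determines `H` and then `E`. The `η`-indices are read off `H` from its least
non-fixed point, and `E` determines its `ε`-indices through its lower adjoint, the product of the
maps skipping `j_l + 1, …, j_1 + 1`.
-/

/-- The free monoid on the generators `η_k` and `ε_k` (`k ∈ ℕ`). -/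
abbrev FreeAdj := FreeMonoid (Bool × ℕ)

/-- The generator `η_k`. -/
def ηgen (k : ℕ) : FreeAdj := FreeMonoid.of (true, k)

/-- The generator `ε_k`. -/
def εgen (k : ℕ) : FreeAdj := FreeMonoid.of (false, k)

/-- The set of relation pairs `R₀`. -/
inductive R0 : FreeAdj → FreeAdj → Prop
  | ee {i j : ℕ} (h : i < j) : R0 (εgen i * εgen j) (εgen (j - 1) * εgen i)
  | hh {i j : ℕ} (h : i < j) : R0 (ηgen j * ηgen i) (ηgen i * ηgen (j - 1))
  | eh_gt {i j : ℕ} (h : i + 1 < j) : R0 (εgen i * ηgen j) (ηgen (j - 1) * εgen i)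
  | eh_lt {i j : ℕ} (h : j < i) : R0 (εgen i * ηgen j) (ηgen j * εgen (i - 1))
  | eh_eq {i : ℕ} (h : 0 < i) : R0 (εgen i * ηgen i) (εgen (i - 1) * ηgen i)
  | eh_succ (i : ℕ) : R0 (εgen i * ηgen (i + 1)) (εgen i * ηgen i)
  | eh_zero : R0 (εgen 0 * ηgen 0) 1

/-- The monoid `F₀`: the quotient of the free monoid by the congruence
generated by `R₀`. -/
abbrev F0 := (conGen R0).Quotient

/-- The quotient map `π : F →* F₀`. -/
def πmap : FreeAdj →* F0 := (conGen R0).mk'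

theorem Function.End.mul_apply {α : Type*} (f g : Function.End α) (a : α) : (f * g) a = f (g a) :=
  rfl

namespace F0

open List

def ηword (is : List ℕ) : FreeAdj := (is.map ηgen).prod

def εword (js : List ℕ) : FreeAdj := (js.map εgen).prod

@[simp] theorem ηword_nil : ηword [] = 1 := rfl

@[simp] theorem εword_nil : εword [] = 1 := rfl

@[simp] theorem ηword_cons (i : ℕ) (is : List ℕ) : ηword (i :: is) = ηgen i * ηword is :=
  prod_cons

@[simp] theorem εword_cons (j : ℕ) (js : List ℕ) : εword (j :: js) = εgen j * εword js :=
  prod_cons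

def coface (i : ℕ) : Function.End ℕ := fun n => if n < i then n else n + 1

def codegeneracy (i : ℕ) : Function.End ℕ := fun n => if n ≤ i then n else n - 1

def wordAction : FreeAdj →* Function.End ℕ :=
  FreeMonoid.lift fun
    | (true, i) => coface i
    | (false, i) => codegeneracy i

theorem wordAction_ηgen (i : ℕ) : wordAction (ηgen i) = coface i := rfl

theorem wordAction_εgen (i : ℕ) : wordAction (εgen i) = codegeneracy i := rfl

theorem wordAction_eq_of_R0 {a b : FreeAdj} (h : R0 a b) : wordAction a = wordAction b := by
  cases h <;> funext n <;>
    simp only [map_mul, map_one, wordAction_ηgen, wordAction_εgen, Function.End.mul_apply, coface,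
      codegeneracy] <;> split_ifs <;> first | rfl | omega

def action : F0 →* Function.End ℕ :=
  Con.lift _ wordAction <| Con.conGen_le.mpr fun _ _ h =>
    (Con.ker_rel wordAction).mpr (wordAction_eq_of_R0 h)

theorem action_πmap (w : FreeAdj) : action (πmap w) = wordAction w := Con.lift_mk' _ _

def cofaces (is : List ℕ) : Function.End ℕ := (is.map coface).prod

def codegeneracies (js : List ℕ) : Function.End ℕ := (js.map codegeneracy).prod

theorem wordAction_ηword (is : List ℕ) : wordAction (ηword is) = cofaces is := by
  simp only [ηword, cofaces, map_list_prod, List.map_map]; rfl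

theorem wordAction_εword (js : List ℕ) : wordAction (εword js) = codegeneracies js := by
  simp only [εword, codegeneracies, map_list_prod, List.map_map]; rfl

theorem cofaces_cons_apply (i : ℕ) (is : List ℕ) (n : ℕ) :
    cofaces (i :: is) n = coface i (cofaces is n) := by
  simp [cofaces, Function.End.mul_apply]

theorem coface_strictMono (i : ℕ) : StrictMono (coface i) := by
  intro a b h
  simp only [coface]
  split_ifs <;> omega

theorem cofaces_strictMono (is : List ℕ) : StrictMono (cofaces is) := by
  induction is with
  | nil => exact strictMono_id
  | cons i is ih =>
    intro a b h
    simpa only [cofaces_cons_apply] using coface_strictMono i (ih h)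

theorem cofaces_apply_of_forall_lt {is : List ℕ} {n : ℕ} (h : ∀ x ∈ is, n < x) :
    cofaces is n = n := by
  induction is with
  | nil => rfl
  | cons i is ih =>
    rw [cofaces_cons_apply, ih fun x hx => h x (mem_cons_of_mem _ hx)]
    exact if_pos (h i mem_cons_self)

theorem lt_cofaces_cons_apply_self (i : ℕ) (is : List ℕ) : i < cofaces (i :: is) i := by
  rw [cofaces_cons_apply]
  calc i < coface i i := by simp [coface]
    _ ≤ coface i (cofaces is i) := (coface_strictMono i).monotone ((cofaces_strictMono is).id_le i)

theorem le_of_cofaces_cons_eq {i i' : ℕ} {is is' : List ℕ} (hs : (i :: is).Pairwise (· ≤ ·))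
    (h : cofaces (i :: is) = cofaces (i' :: is')) : i ≤ i' := by
  by_contra! hlt
  have hfix : cofaces (i :: is) i' = i' := cofaces_apply_of_forall_lt fun x hx => by
    rcases mem_cons.mp hx with rfl | hx
    exacts [hlt, hlt.trans_le (rel_of_pairwise_cons hs hx)]
  exact (lt_cofaces_cons_apply_self i' is').ne' (h ▸ hfix)

theorem cofaces_cons_ne_one (i : ℕ) (is : List ℕ) : cofaces (i :: is) ≠ 1 := fun h =>
  (lt_cofaces_cons_apply_self i is).ne' (congrFun h i)

theorem cofaces_injective {is is' : List ℕ} (hs : is.Pairwise (· ≤ ·))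
    (hs' : is'.Pairwise (· ≤ ·)) (h : cofaces is = cofaces is') : is = is' := by
  induction is generalizing is' with
  | nil =>
    cases is' with
    | nil => rfl
    | cons i' is' => exact absurd h.symm (cofaces_cons_ne_one i' is')
  | cons i is ih =>
    cases is' with
    | nil => exact absurd h (cofaces_cons_ne_one i is)
    | cons i' is' =>
      obtain rfl : i = i' :=
        (le_of_cofaces_cons_eq hs h).antisymm (le_of_cofaces_cons_eq hs' h.symm)
      have htail : cofaces is = cofaces is' := funext fun n =>
        (coface_strictMono i).injective <| by
          simpa only [cofaces_cons_apply] using congrFun h n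
      rw [ih hs.of_cons hs'.of_cons htail]

theorem gc_coface_codegeneracy (j : ℕ) : GaloisConnection (coface (j + 1)) (codegeneracy j) := by
  intro n m
  simp only [coface, codegeneracy]
  split_ifs <;> omega

theorem cofaces_append (is is' : List ℕ) : cofaces (is ++ is') = cofaces is * cofaces is' := by
  simp [cofaces]

theorem gc_cofaces_codegeneracies (js : List ℕ) :
    GaloisConnection (cofaces (js.map (· + 1)).reverse) (codegeneracies js) := by
  induction js with
  | nil => exact GaloisConnection.id
  | cons j js ih =>
    have gc := (gc_coface_codegeneracy j).compose ih
    simp only [map_cons, reverse_cons, cofaces_append]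
    exact gc

theorem codegeneracies_surjective (js : List ℕ) : Function.Surjective (codegeneracies js) :=
  fun n => ⟨_, (cofaces_strictMono _).injective ((gc_cofaces_codegeneracies js).l_u_l_eq_l n)⟩

theorem codegeneracies_injective {js js' : List ℕ} (hs : js.Pairwise (· ≥ ·))
    (hs' : js'.Pairwise (· ≥ ·)) (h : codegeneracies js = codegeneracies js') : js = js' := by
  have hsorted {l : List ℕ} (hl : l.Pairwise (· ≥ ·)) :
      (l.map (· + 1)).reverse.Pairwise (· ≤ ·) := by
    simpa [pairwise_reverse, pairwise_map] using hl
  have hl : cofaces (js.map (· + 1)).reverse = cofaces (js'.map (· + 1)).reverse :=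
    funext fun n => (gc_cofaces_codegeneracies js).l_unique (gc_cofaces_codegeneracies js')
      (fun m => congrFun h m)
  exact (map_injective_iff.mpr (add_left_injective 1))
    (reverse_injective (cofaces_injective (hsorted hs) (hsorted hs') hl))

theorem cofaces_mul_codegeneracies_injective {is js is' js' : List ℕ}
    (his : is.Pairwise (· ≤ ·)) (hjs : js.Pairwise (· ≥ ·))
    (his' : is'.Pairwise (· ≤ ·)) (hjs' : js'.Pairwise (· ≥ ·))
    (h : cofaces is * codegeneracies js = cofaces is' * codegeneracies js') :
    is = is' ∧ js = js' := by
  have hcomp :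
      (cofaces is : ℕ → ℕ) ∘ codegeneracies js = (cofaces is' : ℕ → ℕ) ∘ codegeneracies js' := h
  have hrange : Set.range (cofaces is : ℕ → ℕ) = Set.range (cofaces is' : ℕ → ℕ) :=
    calc Set.range (cofaces is : ℕ → ℕ)
        = Set.range ((cofaces is : ℕ → ℕ) ∘ codegeneracies js) :=
          ((codegeneracies_surjective js).range_comp _).symm
      _ = Set.range ((cofaces is' : ℕ → ℕ) ∘ codegeneracies js') := by rw [hcomp]
      _ = Set.range (cofaces is' : ℕ → ℕ) := (codegeneracies_surjective js').range_comp _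
  have hH := ((cofaces_strictMono is).range_inj (cofaces_strictMono is')).mp hrange
  refine ⟨cofaces_injective his his' hH, codegeneracies_injective hjs hjs' ?_⟩
  exact funext fun n => (cofaces_strictMono is').injective (by
    simpa only [Function.End.mul_apply, hH] using congrFun h n)

theorem πmap_eq_of_R0 {a b : FreeAdj} (h : R0 a b) : πmap a = πmap b :=
  (Con.eq _).mpr (ConGen.Rel.of _ _ h)

theorem πmap_εgen_mul_ηgen_self (i : ℕ) : πmap (εgen i * ηgen i) = 1 := by
  induction i with
  | zero => rw [πmap_eq_of_R0 R0.eh_zero, map_one]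
  | succ i ih =>
    rw [πmap_eq_of_R0 (R0.eh_eq i.succ_pos), Nat.succ_sub_one, πmap_eq_of_R0 (R0.eh_succ i), ih]

theorem πmap_εgen_mul_ηgen_succ (i : ℕ) : πmap (εgen i * ηgen (i + 1)) = 1 := by
  rw [πmap_eq_of_R0 (R0.eh_succ i), πmap_εgen_mul_ηgen_self]

/-- `η_k` moves right past each `η_i` with `i < k`, its index dropping by one each time. -/
def insertη : ℕ → List ℕ → List ℕ
  | k, [] => [k]
  | k, i :: is => if k ≤ i then k :: i :: is else i :: insertη (k - 1) is

theorem le_of_mem_insertη {b k y : ℕ} {is : List ℕ} (hk : b ≤ k) (his : ∀ x ∈ is, b ≤ x)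
    (hy : y ∈ insertη k is) : b ≤ y := by
  induction is generalizing k with
  | nil => simp_all [insertη]
  | cons i is ih =>
    simp only [insertη] at hy
    split_ifs at hy with h
    · exact (mem_cons.mp hy).elim (· ▸ hk) (his y)
    · rcases mem_cons.mp hy with rfl | hy
      · exact his y mem_cons_self
      · have hbi := his i mem_cons_self
        exact ih (by omega) (fun x hx => his x (mem_cons_of_mem _ hx)) hy

theorem insertη_pairwise (k : ℕ) {is : List ℕ} (his : is.Pairwise (· ≤ ·)) :
    (insertη k is).Pairwise (· ≤ ·) := by
  induction is generalizing k with
  | nil => simp [insertη]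
  | cons i is ih =>
    obtain ⟨hi, his⟩ := pairwise_cons.mp his
    simp only [insertη]
    split_ifs with h
    · exact pairwise_cons.mpr ⟨fun x hx => (mem_cons.mp hx).elim (· ▸ h) (h.trans <| hi x ·),
        pairwise_cons.mpr ⟨hi, his⟩⟩
    · exact pairwise_cons.mpr ⟨fun y => le_of_mem_insertη (by omega) hi, ih (k - 1) his⟩

theorem πmap_ηgen_mul_ηword (k : ℕ) (is : List ℕ) :
    πmap (ηgen k * ηword is) = πmap (ηword (insertη k is)) := by
  induction is generalizing k with
  | nil => simp [insertη]
  | cons i is ih =>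
    by_cases h : k ≤ i
    · simp [insertη, h]
    · rw [insertη, if_neg h, ηword_cons, ηword_cons, ← mul_assoc, map_mul,
        πmap_eq_of_R0 (R0.hh (not_le.mp h)), map_mul, mul_assoc, ← map_mul, ih, ← map_mul]

/-- `ε_k` moves left past each `ε_j` with `k < j`, turning it into `ε_{j-1}`. -/
def insertε : ℕ → List ℕ → List ℕ
  | k, [] => [k]
  | k, j :: js => if j ≤ k then k :: j :: js else (j - 1) :: insertε k js

theorem lt_of_mem_insertε {b k y : ℕ} {js : List ℕ} (hjs : js.Pairwise (· ≥ ·)) (hk : k < b)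
    (hb : ∀ x ∈ js, x ≤ b) (hy : y ∈ insertε k js) : y < b := by
  induction js with
  | nil => simp_all [insertε]
  | cons j js ih =>
    obtain ⟨hj, hjs⟩ := pairwise_cons.mp hjs
    have hjb := hb j mem_cons_self
    simp only [insertε] at hy
    split_ifs at hy with h
    · rcases mem_cons.mp hy with rfl | hy
      · exact hk
      · rcases mem_cons.mp hy with rfl | hy
        · omega
        · have := hj y hy; omega
    · rcases mem_cons.mp hy with rfl | hy
      · omega
      · exact ih hjs (fun x hx => hb x (mem_cons_of_mem _ hx)) hy

theorem insertε_pairwise (k : ℕ) {js : List ℕ} (hjs : js.Pairwise (· ≥ ·)) :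
    (insertε k js).Pairwise (· ≥ ·) := by
  induction js with
  | nil => simp [insertε]
  | cons j js ih =>
    obtain ⟨hj, hjs'⟩ := pairwise_cons.mp hjs
    simp only [insertε]
    split_ifs with h
    · exact pairwise_cons.mpr
        ⟨fun x hx => (mem_cons.mp hx).elim (· ▸ h) fun hx => (hj x hx).trans h, hjs⟩
    · refine pairwise_cons.mpr ⟨fun y hy => ?_, ih hjs'⟩
      have := lt_of_mem_insertε hjs' (b := j) (by omega) hj hy
      omega

theorem πmap_εgen_mul_εword (k : ℕ) (js : List ℕ) :
    πmap (εgen k * εword js) = πmap (εword (insertε k js)) := by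
  induction js with
  | nil => simp [insertε]
  | cons j js ih =>
    by_cases h : j ≤ k
    · simp [insertε, h]
    · rw [insertε, if_neg h, εword_cons, εword_cons, ← mul_assoc, map_mul,
        πmap_eq_of_R0 (R0.ee (not_le.mp h)), map_mul, mul_assoc, ← map_mul, ih, ← map_mul]

/-- Rewrites `ε_k η_{i₁} ⋯ η_{iₘ}` as `η_{i'₁} ⋯ η_{i'ₘ'}` followed by at most one `ε`; the `ε` is
absorbed as soon as it meets `η_k` or `η_{k+1}`. -/
def pushε : ℕ → List ℕ → List ℕ × Option ℕ
  | k, [] => ([], some k)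
  | k, i :: is =>
    if i = k ∨ i = k + 1 then (is, none)
    else if k + 1 < i then ((i - 1) :: (pushε k is).1, (pushε k is).2)
    else (i :: (pushε (k - 1) is).1, (pushε (k - 1) is).2)

theorem le_of_mem_pushε_fst {b k y : ℕ} {is : List ℕ} (his : ∀ x ∈ is, b ≤ x)
    (hy : y ∈ (pushε k is).1) : b ≤ y + 1 ∧ (b ≤ k + 1 → b ≤ y) := by
  induction is generalizing k with
  | nil => simp [pushε] at hy
  | cons i is ih =>
    have hbi := his i mem_cons_self
    have his' : ∀ x ∈ is, b ≤ x := fun x hx => his x (mem_cons_of_mem _ hx)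
    simp only [pushε] at hy
    split_ifs at hy with h₁ h₂
    · exact ⟨by have := his' y hy; omega, fun _ => his' y hy⟩
    · rcases mem_cons.mp hy with rfl | hy
      · omega
      · exact ih his' hy
    · rcases mem_cons.mp hy with rfl | hy
      · omega
      · have := ih his' hy
        omega

theorem pushε_fst_pairwise (k : ℕ) {is : List ℕ} (his : is.Pairwise (· ≤ ·)) :
    (pushε k is).1.Pairwise (· ≤ ·) := by
  induction is generalizing k with
  | nil => simp [pushε]
  | cons i is ih =>
    obtain ⟨hi, his⟩ := pairwise_cons.mp his
    simp only [pushε]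
    split_ifs with h₁ h₂
    · exact his
    · refine pairwise_cons.mpr ⟨fun y hy => ?_, ih k his⟩
      have := (le_of_mem_pushε_fst hi hy).1
      omega
    · exact pairwise_cons.mpr ⟨fun y hy => (le_of_mem_pushε_fst hi hy).2 (by omega), ih _ his⟩

theorem πmap_εgen_mul_ηword (k : ℕ) (is : List ℕ) :
    πmap (εgen k * ηword is) = πmap (ηword (pushε k is).1 * εword (pushε k is).2.toList) := by
  induction is generalizing k with
  | nil => simp [pushε]
  | cons i is ih =>
    rw [ηword_cons, ← mul_assoc, map_mul]
    by_cases h₁ : i = k ∨ i = k + 1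
    · have hcancel : πmap (εgen k * ηgen i) = 1 := by
        rcases h₁ with rfl | rfl
        exacts [πmap_εgen_mul_ηgen_self i, πmap_εgen_mul_ηgen_succ k]
      simp [pushε, h₁, hcancel]
    by_cases h₂ : k + 1 < i
    · rw [πmap_eq_of_R0 (R0.eh_gt h₂), map_mul, mul_assoc, ← map_mul, ih]
      simp [pushε, h₁, h₂, mul_assoc]
    · rw [πmap_eq_of_R0 (R0.eh_lt (by omega : i < k)), map_mul, mul_assoc, ← map_mul, ih]
      simp [pushε, h₁, h₂, mul_assoc]

def IsCanonical (x : F0) : Prop :=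
  ∃ p : List ℕ × List ℕ, p.1.Pairwise (· ≤ ·) ∧ p.2.Pairwise (· ≥ ·) ∧
    x = πmap (ηword p.1 * εword p.2)

theorem IsCanonical.ηgen_mul {x : F0} (hx : IsCanonical x) (k : ℕ) :
    IsCanonical (πmap (ηgen k) * x) := by
  obtain ⟨⟨is, js⟩, his, hjs, rfl⟩ := hx
  refine ⟨(insertη k is, js), insertη_pairwise k his, hjs, ?_⟩
  rw [← map_mul, ← mul_assoc, map_mul, πmap_ηgen_mul_ηword, ← map_mul]

theorem IsCanonical.εgen_mul {x : F0} (hx : IsCanonical x) (k : ℕ) :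
    IsCanonical (πmap (εgen k) * x) := by
  obtain ⟨⟨is, js⟩, his, hjs, rfl⟩ := hx
  have hpush : πmap (εgen k) * πmap (ηword is * εword js) =
      πmap (ηword (pushε k is).1) * πmap (εword (pushε k is).2.toList * εword js) := by
    rw [← map_mul, ← mul_assoc, map_mul, πmap_εgen_mul_ηword, map_mul, map_mul, mul_assoc]
  rw [hpush]
  cases (pushε k is).2 with
  | none => exact ⟨((pushε k is).1, js), pushε_fst_pairwise k his, hjs, by simp⟩
  | some k' =>
    refine ⟨((pushε k is).1, insertε k' js), pushε_fst_pairwise k his, insertε_pairwise k' hjs, ?_⟩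
    simp only [Option.toList_some, εword_cons, εword_nil, mul_one]
    rw [πmap_εgen_mul_εword, ← map_mul]

theorem isCanonical (x : F0) : IsCanonical x := by
  obtain ⟨w, rfl⟩ := Con.mk'_surjective x
  induction w using FreeMonoid.inductionOn' with
  | one => exact ⟨([], []), Pairwise.nil, Pairwise.nil, rfl⟩
  | of_mul g w ih =>
    obtain ⟨_ | _, k⟩ := g
    · exact ih.εgen_mul k
    · exact ih.ηgen_mul k

theorem eq_of_πmap_eq {p q : List ℕ × List ℕ} (hp₁ : p.1.Pairwise (· ≤ ·))
    (hp₂ : p.2.Pairwise (· ≥ ·)) (hq₁ : q.1.Pairwise (· ≤ ·)) (hq₂ : q.2.Pairwise (· ≥ ·))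
    (h : πmap (ηword p.1 * εword p.2) = πmap (ηword q.1 * εword q.2)) : p = q := by
  have h' := congrArg action h
  simp only [action_πmap, map_mul, wordAction_ηword, wordAction_εword] at h'
  obtain ⟨h₁, h₂⟩ := cofaces_mul_codegeneracies_injective hp₁ hp₂ hq₁ hq₂ h'
  exact Prod.ext h₁ h₂

end F0

/-- (Theorem 1, canonical form) Every element of `F₀` is `π` of a unique word
`η_{i₁} ⋯ η_{i_k} ε_{j₁} ⋯ ε_{j_l}` with `i₁ ≤ ⋯ ≤ i_k` and `j₁ ≥ ⋯ ≥ j_l`. -/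
theorem canonical_form (x : F0) :
    ∃! p : List ℕ × List ℕ,
      p.1.Pairwise (· ≤ ·) ∧ p.2.Pairwise (· ≥ ·) ∧
      x = πmap ((p.1.map ηgen).prod * (p.2.map εgen).prod) := by
  obtain ⟨p, hp₁, hp₂, rfl⟩ := F0.isCanonical x
  exact ⟨p, ⟨hp₁, hp₂, rfl⟩, fun q ⟨hq₁, hq₂, hq⟩ => F0.eq_of_πmap_eq hq₁ hq₂ hp₁ hp₂ hq.symm⟩
end

section
/- (Termination, condition (A)) Let d : F → ℕ be the weight function determined by d(η_i) = d(ε_i) = i + 1 and d(u * v) = d(u) + d(v), d(1) = 0. Then for every one-step rewrite w ⟶ w' one has d(w) > d(w'); consequently the one-step rewrite relation is well-founded (there is no infinite sequence w₀ ⟶ w₁ ⟶ w₂ ⟶ …), and moreover any two words related by a one-step rewrite in either direction together with equal weights must be equal, so the reflexive-transitive closure of ⟶ is a partial order on F. -/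
/-- The weight function `d` with `d (η_i) = d (ε_i) = i + 1`, additive on
products and `d 1 = 0`. -/
def weight (w : FreeAdj) : ℕ := ((FreeMonoid.toList w).map (fun p => p.2 + 1)).sum

/-- The one-step rewrite relation: `w ⟶ w'` iff `w = L * l * R` and
`w' = L * r * R` for some relation pair `(l, r) ∈ R₀`. -/
def Step (w w' : FreeAdj) : Prop :=
  ∃ (L R l r : FreeAdj), R0 l r ∧ w = L * l * R ∧ w' = L * r * R

lemma weight_mul (u v : FreeAdj) : weight (u * v) = weight u + weight v := by
  simp [weight, FreeMonoid.toList_mul]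

lemma weight_of (p : Bool × ℕ) : weight (FreeMonoid.of p) = p.2 + 1 := by
  simp [weight]

lemma weight_one : weight (1 : FreeAdj) = 0 := by
  simp [weight]

lemma R0_weight {l r : FreeAdj} (h : R0 l r) : weight r < weight l := by
  cases h <;>
    simp_all [weight_mul, weight_of, weight_one, ηgen, εgen] <;> omega

lemma step_weight {w w' : FreeAdj} (h : Step w w') : weight w' < weight w := by
  obtain ⟨L, R, l, r, hr, rfl, rfl⟩ := h
  have := R0_weight hr
  simp [weight_mul]; omega

lemma tg_weight {w w' : FreeAdj} (h : Relation.TransGen Step w w') :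
    weight w' < weight w := by
  induction h with
  | single hs => exact step_weight hs
  | tail _ hs ih => exact lt_trans (step_weight hs) ih

lemma rtg_weight {w w' : FreeAdj} (h : Relation.ReflTransGen Step w w') :
    weight w' ≤ weight w := by
  induction h with
  | refl => exact le_rfl
  | tail _ h ih => exact le_trans (le_of_lt (step_weight h)) ih

/-- (Termination, condition (A)) One-step rewriting strictly decreases the
weight; hence the rewrite relation is well-founded (no infinite rewrite
sequences), words related by a one-step rewrite in either direction with equal
weights are equal, and the reflexive-transitive closure of `⟶` is a partial
order on the free monoid. -/
theorem termination :
    (∀ w w' : FreeAdj, Step w w' → weight w' < weight w) ∧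
    WellFounded (fun w' w : FreeAdj => Step w w') ∧
    (∀ w w' : FreeAdj, (Step w w' ∨ Step w' w) → weight w = weight w' → w = w') ∧
    IsPartialOrder FreeAdj (Relation.ReflTransGen Step) := by

  refine ⟨fun w w' h => step_weight h, ?_, ?_, ?_⟩
  · exact Subrelation.wf (fun h => step_weight h) (measure weight).wf
  · rintro w w' (h | h) he
    · exact absurd (step_weight h) (by omega)
    · exact absurd (step_weight h) (by omega)
  · refine { antisymm := ?_ }
    intro a b hab hba
    cases (Relation.reflTransGen_iff_eq_or_transGen.mp hab) with
    | inl h => exact h.symm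
    | inr h =>
      cases (Relation.reflTransGen_iff_eq_or_transGen.mp hba) with
      | inl h2 => exact h2
      | inr h2 =>
        have h1 := tg_weight h
        have h3 := tg_weight h2
        omega
end
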